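/- Let k ≥ 2, n ≥ 2k, d ≥ 1, let P = P(F) be a nonempty k-local property of [n]^d-arrays over Σ, let (G_0,...,G_r) be an (n,d,k,2k)-system of grids, let ε > 0, and suppose the [n]^d-array A over Σ is ε-far from P. Let W be the family of all maximal (P,A)-witness blocks. Then the total number of entries in the blocks of W satisfies ∑_{B∈W} |B| ≥ ε·(n/3)^d. -/

import Mathlib

open Finset

/-- `I[:ℓ]`: the set of the `ℓ` smallest elements of `I` (or `I` itself if `|I| < ℓ`). -/
def takeSmallest (I : Finset ℕ) (ℓ : ℕ) : Finset ℕ :=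
  I.filter fun x => (I.filter fun y => y ≤ x).card ≤ ℓ

/-- `I[ℓ+1:] = I \ I[:ℓ]`. -/
def dropSmallest (I : Finset ℕ) (ℓ : ℕ) : Finset ℕ :=
  I \ takeSmallest I ℓ

/-- An `(n,w)`-interval partition: a partition of `[n] = {1,…,n}` into consecutive,
pairwise disjoint intervals `I_1, …, I_t`, each of size `w` or `w+1`, where for `j < j'`
every element of `I j` is smaller than every element of `I j'`. -/
structure IntervalPartition (n w : ℕ) where
  t : ℕ
  I : Fin t → Finset ℕ
  interval : ∀ j, ∃ a b, 1 ≤ a ∧ a ≤ b ∧ b ≤ n ∧ I j = Finset.Icc a b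
  size : ∀ j, (I j).card = w ∨ (I j).card = w + 1
  cover : ∀ x ∈ Finset.Icc 1 n, ∃ j, x ∈ I j
  ordered : ∀ j j' : Fin t, j < j' → ∀ x ∈ I j, ∀ y ∈ I j', x < y

/-- The hypergrid `[n]^d`, as a set of tuples. -/
def cube (n d : ℕ) : Set (Fin d → ℕ) :=
  {x | ∀ i, 1 ≤ x i ∧ x i ≤ n}

/-- The `(n,d,k,w)`-grid induced by an `(n,w)`-interval partition. -/
def gridOf (n d k w : ℕ) (P : IntervalPartition n w) : Set (Fin d → ℕ) :=
  {x ∈ cube n d | ∃ i : Fin d, ∃ j : Fin P.t, x i ∈ takeSmallest (P.I j) (k - 1)}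

/-- `G ∈ 𝒢(n,d,k,w)`: `G` is the grid induced by some `(n,w)`-interval partition. -/
def IsGrid (n d k w : ℕ) (G : Set (Fin d → ℕ)) : Prop :=
  ∃ P : IntervalPartition n w, G = gridOf n d k w P

/-- Two entries of `[n]^d` are neighbors if `∑ i, |x i − y i| = 1`. -/
def Neighbor {d : ℕ} (x y : Fin d → ℕ) : Prop :=
  (∑ i, Nat.dist (x i) (y i)) = 1

/-- A `G`-block: a connected component of the neighborhood graph on `[n]^d \ G`. -/
def IsBlock (n d : ℕ) (G B : Set (Fin d → ℕ)) : Prop :=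
  B.Nonempty ∧ B ⊆ cube n d \ G ∧
    (∀ x ∈ B, ∀ y ∈ B,
      Relation.ReflTransGen
        (fun a b => a ∈ cube n d \ G ∧ b ∈ cube n d \ G ∧ Neighbor a b) x y) ∧
    (∀ x ∈ B, ∀ y, y ∈ cube n d \ G → Neighbor x y → y ∈ B)

/-- The closure `B̄` of a block `B`. -/
def blockClosure (n d k : ℕ) (B : Set (Fin d → ℕ)) : Set (Fin d → ℕ) :=
  {x ∈ cube n d | ∃ y ∈ B, ∀ i, Nat.dist (x i) (y i) < k}

/-- The boundary `∂B = B̄ \ B` of a block `B`. -/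
def blockBoundary (n d k : ℕ) (B : Set (Fin d → ℕ)) : Set (Fin d → ℕ) :=
  blockClosure n d k B \ B

/-- A valid location of a width-`k` subarray in `[n]^d`: an element of `[n−k+1]^d`. -/
def ValidLoc (n d k : ℕ) (a : Fin d → ℕ) : Prop :=
  ∀ i, 1 ≤ a i ∧ a i ≤ n - k + 1

/-- The width-`k` box with lowest corner `a`: `{a_1,…,a_1+k−1} × ⋯ × {a_d,…,a_d+k−1}`. -/
def kbox (d k : ℕ) (a : Fin d → ℕ) : Set (Fin d → ℕ) :=
  {x | ∀ i, a i ≤ x i ∧ x i ≤ a i + k - 1}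

/-- Some forbidden pattern of `F` occurs as a consecutive subarray of `A` at location `a`;
patterns are compared on `[k]^d`. -/
def HasCopyAt {σ : Type*} (d k : ℕ) (F : Set ((Fin d → ℕ) → σ))
    (A : (Fin d → ℕ) → σ) (a : Fin d → ℕ) : Prop :=
  ∃ S ∈ F, ∀ j : Fin d → ℕ, (∀ i, 1 ≤ j i ∧ j i ≤ k) →
    A (fun i => a i + j i - 1) = S j

/-- `A` contains an `F`-copy lying inside the set `X`. -/
def HasCopyIn {σ : Type*} (n d k : ℕ) (F : Set ((Fin d → ℕ) → σ))
    (A : (Fin d → ℕ) → σ) (X : Set (Fin d → ℕ)) : Prop :=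
  ∃ a, ValidLoc n d k a ∧ HasCopyAt d k F A a ∧ kbox d k a ⊆ X

/-- `A` satisfies the `k`-local property `P(F)`: it contains no `F`-copy. -/
def SatisfiesP {σ : Type*} (n d k : ℕ) (F : Set ((Fin d → ℕ) → σ))
    (A : (Fin d → ℕ) → σ) : Prop :=
  ¬ ∃ a, ValidLoc n d k a ∧ HasCopyAt d k F A a

/-- `A` is `ε`-far from `P(F)`: every array satisfying `P(F)` differs from `A`
in at least `ε·n^d` entries of `[n]^d`. -/
def FarFrom {σ : Type*} (n d k : ℕ) (F : Set ((Fin d → ℕ) → σ)) (ε : ℝ)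
    (A : (Fin d → ℕ) → σ) : Prop :=
  ∀ A' : (Fin d → ℕ) → σ, SatisfiesP n d k F A' →
    ε * (n : ℝ) ^ d ≤ ({x | x ∈ cube n d ∧ A x ≠ A' x}).ncard

/-- A block `B` is `(P,A)`-unrepairable: every array agreeing with `A` on `∂B`
(including `A` itself) contains an `F`-copy lying inside `B̄`. -/
def Unrepairable {σ : Type*} (n d k : ℕ) (F : Set ((Fin d → ℕ) → σ))
    (A : (Fin d → ℕ) → σ) (B : Set (Fin d → ℕ)) : Prop :=
  ∀ A' : (Fin d → ℕ) → σ, (∀ x ∈ blockBoundary n d k B, A' x = A x) →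
    HasCopyIn n d k F A' (blockClosure n d k B)

/-- `r = ⌊log₂(n/w)⌋`. -/
def sysR (n w : ℕ) : ℕ := Nat.log 2 (n / w)

/-- An `(n,d,k,w)`-system of grids `(G_0, …, G_r)` with `r = ⌊log₂(n/w)⌋`:
`G_i ∈ 𝒢(n,d,k,⌊n/2^(r−i)⌋)` and `G_0 ⊇ G_1 ⊇ ⋯ ⊇ G_r`. -/
structure GridSystem (n d k w : ℕ) where
  G : ℕ → Set (Fin d → ℕ)
  isGrid : ∀ i ≤ sysR n w, IsGrid n d k (n / 2 ^ (sysR n w - i)) (G i)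
  nested : ∀ i j : ℕ, j ≤ i → i ≤ sysR n w → G i ⊆ G j

/-- A `G_i`-block `B` is a `(P,A)`-witness: either `i = 0` and `A` contains an `F`-copy
inside `B̄`, or `i > 0` and `B` is `(P,A)`-unrepairable. -/
def IsWitness {σ : Type*} (n d k w : ℕ) (S : GridSystem n d k w)
    (F : Set ((Fin d → ℕ) → σ)) (A : (Fin d → ℕ) → σ)
    (i : ℕ) (B : Set (Fin d → ℕ)) : Prop :=
  i ≤ sysR n w ∧ IsBlock n d (S.G i) B ∧
    ((i = 0 ∧ HasCopyIn n d k F A (blockClosure n d k B)) ∨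
      (0 < i ∧ Unrepairable n d k F A B))

/-- A witness is maximal if all of its ancestors (blocks of coarser grids containing it)
are `(P,A)`-repairable. -/
def IsMaximalWitness {σ : Type*} (n d k w : ℕ) (S : GridSystem n d k w)
    (F : Set ((Fin d → ℕ) → σ)) (A : (Fin d → ℕ) → σ)
    (i : ℕ) (B : Set (Fin d → ℕ)) : Prop :=
  IsWitness n d k w S F A i B ∧
    ∀ j, i < j → j ≤ sysR n w → ∀ B', IsBlock n d (S.G j) B' → B ⊆ B' →
      ¬ Unrepairable n d k F A B'

/-- The family `W` of all maximal `(P,A)`-witness blocks. -/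
def MaxWitnessFamily {σ : Type*} (n d k w : ℕ) (S : GridSystem n d k w)
    (F : Set ((Fin d → ℕ) → σ)) (A : (Fin d → ℕ) → σ) :
    Set (Set (Fin d → ℕ)) :=
  {B | ∃ i, IsMaximalWitness n d k w S F A i B}

/-- `Par(B)` for a `G_i`-block `B`: the `G_{i+1}`-block containing `B` if `i < r`
(expressed as the union of all such blocks, of which there is exactly one), and
`[n]^d` for `i = r`. -/
def parentSet (n d k w : ℕ) (S : GridSystem n d k w) (i : ℕ)
    (B : Set (Fin d → ℕ)) : Set (Fin d → ℕ) :=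
  if i = sysR n w then cube n d
  else ⋃₀ {B' | IsBlock n d (S.G (i + 1)) B' ∧ B ⊆ B'}

/-!
Each grid `G_j` comes from an interval partition of width `w_j ≥ 2k`, and its blocks are the
products of trimmed intervals `I[k:]`. Distinct blocks of one grid are `k` apart, so a width-`k`
box meets exactly one block per level, and blocks of different levels meeting a common box are
nested. The parent of a maximal witness `B` (the whole cube if `B` is at the top level) is
repairable, and it has at most `3^d |B|` entries because widths at most double between levels.
Repairing the inclusion-maximal parents yields an array with no `F`-copy: a copy meeting a
repaired parent lies in its closure, and a copy meeting none is a copy in `A`, whose level-`0`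
block is a witness lying below a maximal witness whose parent meets the copy. Hence
`ε n^d ≤ ∑ |Par B| ≤ 3^d ∑ |B|`.
-/

theorem Neighbor.dist_le_one {d : ℕ} {x y : Fin d → ℕ} (h : Neighbor x y) (i : Fin d) :
    Nat.dist (x i) (y i) ≤ 1 :=
  h ▸ single_le_sum (f := fun j => Nat.dist (x j) (y j)) (fun _ _ => Nat.zero_le _) (mem_univ i)

/-- Step one coordinate towards `y`, decreasing the `ℓ¹` distance by one. -/
theorem reflTransGen_of_mem_Icc {d : ℕ} {R : Set (Fin d → ℕ)} {u v : Fin d → ℕ}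
    (hR : Set.Icc u v ⊆ R) {x y : Fin d → ℕ} (hx : x ∈ Set.Icc u v) (hy : y ∈ Set.Icc u v) :
    Relation.ReflTransGen (fun a b => a ∈ R ∧ b ∈ R ∧ Neighbor a b) x y := by
  classical
  induction hN : ∑ i, Nat.dist (x i) (y i) generalizing x with
  | zero =>
    obtain rfl : x = y := funext fun i =>
      Nat.eq_of_dist_eq_zero (sum_eq_zero_iff.1 hN i (mem_univ i))
    rfl
  | succ N ih =>
    obtain ⟨i, hi⟩ : ∃ i, x i ≠ y i := by
      by_contra! h
      simp [h, Nat.dist_self] at hN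
    have : u i ≤ x i := hx.1 i
    have : x i ≤ v i := hx.2 i
    have : u i ≤ y i := hy.1 i
    have : y i ≤ v i := hy.2 i
    obtain ⟨t, hut, htv, hxt, hty⟩ : ∃ t, u i ≤ t ∧ t ≤ v i ∧ Nat.dist (x i) t = 1 ∧
        Nat.dist (x i) (y i) = Nat.dist t (y i) + 1 := by
      unfold Nat.dist
      rcases Ne.lt_or_gt hi with h | h
      exacts [⟨x i + 1, by omega⟩, ⟨x i - 1, by omega⟩]
    set z := Function.update x i t
    have hz : z ∈ Set.Icc u v := by
      constructor <;> intro j <;> rcases eq_or_ne j i with rfl | hj <;>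
        simp [z, Function.update_of_ne, *, hx.1 j, hx.2 j]
    have hxz : Neighbor x z := by
      rw [Neighbor, sum_eq_single i (fun j _ hj => by simp [z, Function.update_of_ne hj])
        (by simp)]
      simpa [z] using hxt
    have hrest : ∑ j ∈ univ.erase i, Nat.dist (z j) (y j) =
        ∑ j ∈ univ.erase i, Nat.dist (x j) (y j) :=
      sum_congr rfl fun j hj => by simp only [z, Function.update_of_ne (ne_of_mem_erase hj)]
    refine .head ⟨hR hx, hR hz, hxz⟩ (ih hz ?_)
    rw [← add_sum_erase _ _ (mem_univ i)] at hN ⊢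
    rw [hrest]
    simp only [z, Function.update_self]
    omega

theorem cube_eq_piFinset (n d : ℕ) :
    cube n d = Fintype.piFinset fun _ : Fin d => Icc 1 n := by
  ext x
  simp only [cube, Set.mem_ofPred_eq, mem_coe, Fintype.mem_piFinset, mem_Icc]

theorem cube_finite (n d : ℕ) : (cube n d).Finite := by
  rw [cube_eq_piFinset]
  exact Finset.finite_toSet _

theorem ncard_cube (n d : ℕ) : (cube n d).ncard = n ^ d := by
  rw [cube_eq_piFinset, Set.ncard_coe_finset, Fintype.card_piFinset]
  simp

section Blocks

variable {n d : ℕ} {G G' B B' : Set (Fin d → ℕ)}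

theorem IsBlock.subset_cube (hB : IsBlock n d G B) : B ⊆ cube n d :=
  fun _ hx => (hB.2.1 hx).1

theorem IsBlock.subset_of_inter_nonempty (hB : IsBlock n d G B) (hB' : IsBlock n d G' B')
    (hGG : G' ⊆ G) (hBB : (B ∩ B').Nonempty) : B ⊆ B' := by
  obtain ⟨z, hzB, hzB'⟩ := hBB
  intro y hy
  have hzy := hB.2.2.1 z hzB y hy
  clear hy
  induction hzy with
  | refl => exact hzB'
  | tail _ hbc ih =>
    obtain ⟨-, ⟨hc, hcG⟩, hbc⟩ := hbc
    exact hB'.2.2.2 _ ih _ ⟨hc, fun h => hcG (hGG h)⟩ hbc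

theorem IsBlock.eq_of_inter_nonempty (hB : IsBlock n d G B) (hB' : IsBlock n d G B')
    (hBB : (B ∩ B').Nonempty) : B = B' :=
  (hB.subset_of_inter_nonempty hB' le_rfl hBB).antisymm
    (hB'.subset_of_inter_nonempty hB le_rfl (Set.inter_comm B B' ▸ hBB))

end Blocks

theorem ncard_sUnion_image_le {α ι : Type*} {W : Set ι} (hW : W.Finite) {f : ι → Set α}
    {g : ι → ℕ} {c : ℕ} (hf : ∀ i ∈ W, (f i).ncard ≤ c * g i) :
    (⋃₀ (f '' W)).ncard ≤ c * ∑ᶠ i ∈ W, g i := by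
  rw [Set.sUnion_image, mul_finsum_mem' _ _ hW, finsum_mem_eq_finite_toFinset_sum _ hW]
  refine (hW.ncard_biUnion_le f).trans ?_
  rw [finsum_mem_eq_finite_toFinset_sum _ hW]
  exact sum_le_sum fun i hi => hf i (hW.mem_toFinset.1 hi)

theorem dropSmallest_Icc (a b ℓ : ℕ) : dropSmallest (Icc a b) ℓ = Icc (a + ℓ) b := by
  ext x
  have hcard : ((Icc a b).filter fun y => y ≤ x) = Icc a (min b x) := by
    ext y
    simp only [mem_filter, mem_Icc]
    omega
  simp only [dropSmallest, takeSmallest, mem_sdiff, mem_filter, hcard, Nat.card_Icc, mem_Icc]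
  omega

namespace IntervalPartition

variable {n w : ℕ} (P : IntervalPartition n w)

noncomputable def lo (j : Fin P.t) : ℕ := (P.interval j).choose

noncomputable def hi (j : Fin P.t) : ℕ := (P.interval j).choose_spec.choose

theorem lo_spec (j : Fin P.t) :
    1 ≤ P.lo j ∧ P.lo j ≤ P.hi j ∧ P.hi j ≤ n ∧ P.I j = Icc (P.lo j) (P.hi j) :=
  (P.interval j).choose_spec.choose_spec

theorem mem_I_iff {j : Fin P.t} {x : ℕ} : x ∈ P.I j ↔ P.lo j ≤ x ∧ x ≤ P.hi j := by
  rw [(P.lo_spec j).2.2.2, mem_Icc]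

theorem width_bounds (j : Fin P.t) : P.lo j + w ≤ P.hi j + 1 ∧ P.hi j ≤ P.lo j + w := by
  have hsize := P.size j
  have := (P.lo_spec j).2.1
  rw [(P.lo_spec j).2.2.2, Nat.card_Icc] at hsize
  omega

theorem eq_of_mem_I {j j' : Fin P.t} {x : ℕ} (hx : x ∈ P.I j) (hx' : x ∈ P.I j') : j = j' := by
  by_contra hne
  rcases Ne.lt_or_gt hne with h | h
  · exact lt_irrefl x (P.ordered j j' h x hx x hx')
  · exact lt_irrefl x (P.ordered j' j h x hx' x hx)

theorem mem_dropSmallest_iff {j : Fin P.t} {ℓ x : ℕ} :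
    x ∈ dropSmallest (P.I j) ℓ ↔ P.lo j + ℓ ≤ x ∧ x ≤ P.hi j := by
  rw [(P.lo_spec j).2.2.2, dropSmallest_Icc, mem_Icc]

theorem eq_of_dist_lt {k : ℕ} {j j' : Fin P.t} {x y : ℕ}
    (hx : x ∈ dropSmallest (P.I j) (k - 1)) (hy : y ∈ dropSmallest (P.I j') (k - 1))
    (hxy : Nat.dist x y < k) : j = j' := by
  have gap : ∀ {j j' : Fin P.t} {x y : ℕ}, j < j' → x ∈ dropSmallest (P.I j) (k - 1) →
      y ∈ dropSmallest (P.I j') (k - 1) → x + k ≤ y := by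
    intro j j' x y hlt hx hy
    have hlo : P.lo j' ∈ P.I j' := P.mem_I_iff.2 ⟨le_rfl, (P.lo_spec j').2.1⟩
    have := P.ordered j j' hlt x (sdiff_subset hx) _ hlo
    have := (P.mem_dropSmallest_iff.1 hy).1
    omega
  unfold Nat.dist at hxy
  by_contra hne
  rcases Ne.lt_or_gt hne with h | h
  · have := gap h hx hy; omega
  · have := gap h hy hx; omega

theorem exists_mem_dropSmallest_of_window {k c : ℕ} (hk : 1 ≤ k) (hkw : k ≤ w) (hc : 1 ≤ c)
    (hcn : c + k ≤ n + 1) :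
    ∃ j z, c ≤ z ∧ z < c + k ∧ z ∈ dropSmallest (P.I j) (k - 1) := by
  obtain ⟨j, hj⟩ := P.cover (c + k - 1) (mem_Icc.2 ⟨by omega, by omega⟩)
  have hj := P.mem_I_iff.1 hj
  by_cases hlo : P.lo j + (k - 1) ≤ c + k - 1
  · exact ⟨j, c + k - 1, by omega, by omega, P.mem_dropSmallest_iff.2 ⟨hlo, hj.2⟩⟩
  -- otherwise the window contains `lo j - 1`, the last point of the preceding interval
  obtain ⟨j', hj'⟩ := P.cover (P.lo j - 1) (mem_Icc.2 ⟨by omega, by omega⟩)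
  have hj'I := P.mem_I_iff.1 hj'
  have hhi : P.hi j' = P.lo j - 1 := by
    by_contra hne
    have hmem : P.lo j ∈ P.I j' := P.mem_I_iff.2 ⟨by omega, by omega⟩
    have hmem' : P.lo j ∈ P.I j := P.mem_I_iff.2 ⟨le_rfl, (P.lo_spec j).2.1⟩
    have := P.eq_of_mem_I hmem hmem'
    subst this
    omega
  have := P.width_bounds j'
  exact ⟨j', P.lo j - 1, by omega, by omega, P.mem_dropSmallest_iff.2 ⟨by omega, by omega⟩⟩

theorem card_dropSmallest {k : ℕ} (hk : 1 ≤ k) (hkw : k ≤ w) (j : Fin P.t) :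
    w + 1 - k ≤ (dropSmallest (P.I j) (k - 1)).card ∧
      (dropSmallest (P.I j) (k - 1)).card ≤ w + 2 - k := by
  rw [(P.lo_spec j).2.2.2, dropSmallest_Icc, Nat.card_Icc]
  have := P.width_bounds j
  omega

variable {k d : ℕ}

/-- The box `∏ ℓ, I_{js ℓ}[k:]`. -/
def cell (k : ℕ) (js : Fin d → Fin P.t) : Set (Fin d → ℕ) :=
  {x | ∀ ℓ, x ℓ ∈ dropSmallest (P.I (js ℓ)) (k - 1)}

theorem cell_eq_Icc (js : Fin d → Fin P.t) :
    P.cell k js = Set.Icc (fun ℓ => P.lo (js ℓ) + (k - 1)) fun ℓ => P.hi (js ℓ) := by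
  ext x
  simp only [cell, Set.mem_ofPred_eq, mem_dropSmallest_iff, Set.mem_Icc, Pi.le_def, forall_and]

theorem ncard_cell (js : Fin d → Fin P.t) :
    (P.cell k js).ncard = ∏ ℓ, (dropSmallest (P.I (js ℓ)) (k - 1)).card := by
  have : P.cell k js = Fintype.piFinset fun ℓ => dropSmallest (P.I (js ℓ)) (k - 1) := by
    ext x
    simp [cell]
  rw [this, Set.ncard_coe_finset, Fintype.card_piFinset]

theorem mem_compl_gridOf_iff {x : Fin d → ℕ} :
    x ∈ cube n d \ gridOf n d k w P ↔ ∃ js, x ∈ P.cell k js := by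
  refine Iff.trans ?_
    (Classical.skolem (p := fun ℓ j => x ℓ ∈ dropSmallest (P.I j) (k - 1)))
  constructor
  · rintro ⟨hx, hxG⟩ ℓ
    obtain ⟨j, hj⟩ := P.cover (x ℓ) (mem_Icc.2 (hx ℓ))
    exact ⟨j, mem_sdiff.2 ⟨hj, fun htake => hxG ⟨hx, ℓ, j, htake⟩⟩⟩
  · intro h
    choose js hjs using h
    refine ⟨fun ℓ => ?_, ?_⟩
    · have := P.mem_dropSmallest_iff.1 (hjs ℓ)
      have := P.lo_spec (js ℓ)
      omega
    · rintro ⟨-, ℓ, j, htake⟩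
      obtain rfl := P.eq_of_mem_I (sdiff_subset (hjs ℓ)) (filter_subset _ _ htake)
      exact (mem_sdiff.1 (hjs ℓ)).2 htake

theorem isBlock_cell (hk : 2 ≤ k) (hkw : k ≤ w) (js : Fin d → Fin P.t) :
    IsBlock n d (gridOf n d k w P) (P.cell k js) := by
  have hcompl : P.cell k js ⊆ cube n d \ gridOf n d k w P :=
    fun x hx => P.mem_compl_gridOf_iff.2 ⟨js, hx⟩
  refine ⟨⟨_, fun ℓ => P.mem_dropSmallest_iff.2 ⟨le_rfl, ?_⟩⟩, hcompl, ?_, ?_⟩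
  · have := P.width_bounds (js ℓ)
    omega
  · rw [cell_eq_Icc] at hcompl ⊢
    exact fun x hx y hy => reflTransGen_of_mem_Icc hcompl hx hy
  · intro x hx y hy hxy
    obtain ⟨js', hy⟩ := P.mem_compl_gridOf_iff.1 hy
    have : js = js' := funext fun ℓ =>
      P.eq_of_dist_lt (hx ℓ) (hy ℓ) ((hxy.dist_le_one ℓ).trans_lt (by omega))
    exact this ▸ hy

theorem _root_.IsBlock.exists_eq_cell (hk : 2 ≤ k) (hkw : k ≤ w) {B : Set (Fin d → ℕ)}
    (hB : IsBlock n d (gridOf n d k w P) B) : ∃ js, B = P.cell k js := by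
  obtain ⟨x, hx⟩ := hB.1
  obtain ⟨js, hjs⟩ := P.mem_compl_gridOf_iff.1 (hB.2.1 hx)
  exact ⟨js, hB.eq_of_inter_nonempty (P.isBlock_cell hk hkw js) ⟨x, hx, hjs⟩⟩

end IntervalPartition

section Boxes

variable {n d k : ℕ} {a : Fin d → ℕ}

theorem kbox_subset_cube (hkn : k ≤ n) (ha : ValidLoc n d k a) : kbox d k a ⊆ cube n d := by
  intro x hx i
  have := ha i
  have := hx i
  omega

theorem kbox_subset_blockClosure (hkn : k ≤ n) (ha : ValidLoc n d k a)
    {B : Set (Fin d → ℕ)} (hB : (B ∩ kbox d k a).Nonempty) :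
    kbox d k a ⊆ blockClosure n d k B := by
  obtain ⟨z, hzB, hz⟩ := hB
  refine fun x hx => ⟨kbox_subset_cube hkn ha hx, z, hzB, fun i => ?_⟩
  have := hx i
  have := hz i
  have := ha i
  unfold Nat.dist
  omega

variable {σ : Type*} {F : Set ((Fin d → ℕ) → σ)} {A A' : (Fin d → ℕ) → σ}

theorem HasCopyAt.congr (h : HasCopyAt d k F A a) (hAA : ∀ x ∈ kbox d k a, A x = A' x) :
    HasCopyAt d k F A' a := by
  obtain ⟨S, hS, hA⟩ := h
  refine ⟨S, hS, fun j hj => ?_⟩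
  rw [← hA j hj, hAA]
  intro i
  have := hj i
  dsimp only
  omega

theorem HasCopyIn.congr {X : Set (Fin d → ℕ)} (h : HasCopyIn n d k F A X)
    (hAA : ∀ x ∈ X, A x = A' x) : HasCopyIn n d k F A' X := by
  obtain ⟨a, ha, hcopy, hX⟩ := h
  exact ⟨a, ha, hcopy.congr fun x hx => hAA x (hX hx), hX⟩

end Boxes

namespace IsGrid

variable {n d k w : ℕ} {G B B' : Set (Fin d → ℕ)}

theorem exists_isBlock_mem (hG : IsGrid n d k w G) (hk : 2 ≤ k) (hkw : k ≤ w)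
    {z : Fin d → ℕ} (hz : z ∈ cube n d \ G) : ∃ B, IsBlock n d G B ∧ z ∈ B := by
  obtain ⟨P, rfl⟩ := hG
  obtain ⟨js, hjs⟩ := P.mem_compl_gridOf_iff.1 hz
  exact ⟨_, P.isBlock_cell hk hkw js, hjs⟩

theorem exists_isBlock_inter_kbox (hG : IsGrid n d k w G) (hk : 2 ≤ k) (hkw : k ≤ w)
    (hkn : k ≤ n) {a : Fin d → ℕ} (ha : ValidLoc n d k a) :
    ∃ B, IsBlock n d G B ∧ (B ∩ kbox d k a).Nonempty := by
  obtain ⟨P, rfl⟩ := hG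
  have hwin : ∀ ℓ, ∃ j z, a ℓ ≤ z ∧ z < a ℓ + k ∧ z ∈ dropSmallest (P.I j) (k - 1) :=
    fun ℓ => P.exists_mem_dropSmallest_of_window (by omega) hkw (ha ℓ).1
      (by have := (ha ℓ).2; omega)
  choose js z hz using hwin
  refine ⟨_, P.isBlock_cell hk hkw js, z, fun ℓ => (hz ℓ).2.2, fun ℓ => ?_⟩
  have := hz ℓ
  omega

theorem eq_of_inter_kbox (hG : IsGrid n d k w G) (hk : 2 ≤ k) (hkw : k ≤ w)
    (hB : IsBlock n d G B) (hB' : IsBlock n d G B') {a : Fin d → ℕ}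
    (h : (B ∩ kbox d k a).Nonempty) (h' : (B' ∩ kbox d k a).Nonempty) : B = B' := by
  obtain ⟨P, rfl⟩ := hG
  obtain ⟨js, rfl⟩ := hB.exists_eq_cell P hk hkw
  obtain ⟨js', rfl⟩ := hB'.exists_eq_cell P hk hkw
  obtain ⟨z, hz, hza⟩ := h
  obtain ⟨z', hz', hza'⟩ := h'
  congr 1
  funext ℓ
  refine P.eq_of_dist_lt (hz ℓ) (hz' ℓ) ?_
  have := hza ℓ
  have := hza' ℓ
  unfold Nat.dist
  omega

theorem ncard_isBlock_bounds (hG : IsGrid n d k w G) (hk : 2 ≤ k) (hkw : k ≤ w)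
    (hB : IsBlock n d G B) : (w + 1 - k) ^ d ≤ B.ncard ∧ B.ncard ≤ (w + 2 - k) ^ d := by
  obtain ⟨P, rfl⟩ := hG
  obtain ⟨js, rfl⟩ := hB.exists_eq_cell P hk hkw
  rw [P.ncard_cell]
  constructor
  · simpa using pow_card_le_prod univ _ _ fun ℓ _ => (P.card_dropSmallest (by omega) hkw (js ℓ)).1
  · simpa using prod_le_pow_card univ _ _ fun ℓ _ => (P.card_dropSmallest (by omega) hkw (js ℓ)).2

end IsGrid

theorem le_div_two_pow_sysR_sub {n w : ℕ} (hw : 0 < w) (hwn : w ≤ n) (j : ℕ) :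
    w ≤ n / 2 ^ (sysR n w - j) := by
  have hr : 2 ^ sysR n w ≤ n / w := Nat.pow_log_le_self 2 (Nat.div_pos hwn hw).ne'
  rw [Nat.le_div_iff_mul_le hw] at hr
  calc w ≤ n / 2 ^ sysR n w := (Nat.le_div_iff_mul_le (by positivity)).2 (by linarith)
    _ ≤ n / 2 ^ (sysR n w - j) :=
      Nat.div_le_div_left (Nat.pow_le_pow_right two_pos (Nat.sub_le _ _)) (by positivity)

theorem div_two_pow_le (n m : ℕ) : n / 2 ^ m ≤ 2 * (n / 2 ^ (m + 1)) + 1 := by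
  rw [pow_succ, ← Nat.div_div_eq_div_mul]
  omega

namespace GridSystem

variable {n d k w : ℕ} (S : GridSystem n d k w)

/-- `[n]^d` is included as the parent of the top-level block (see `parentSet`). -/
def IsBlockOrCube (C : Set (Fin d → ℕ)) : Prop :=
  C = cube n d ∨ ∃ j ≤ sysR n w, IsBlock n d (S.G j) C

theorem IsBlockOrCube.subset_cube {C : Set (Fin d → ℕ)} (hC : S.IsBlockOrCube C) :
    C ⊆ cube n d := by
  rcases hC with rfl | ⟨j, -, hC⟩
  exacts [le_rfl, hC.subset_cube]

theorem exists_isBlock_superset (hk : 2 ≤ k) (hkw : k ≤ w) (hwn : w ≤ n) {i j : ℕ}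
    (hij : i ≤ j) (hj : j ≤ sysR n w) {B : Set (Fin d → ℕ)} (hB : IsBlock n d (S.G i) B) :
    ∃ B', IsBlock n d (S.G j) B' ∧ B ⊆ B' := by
  obtain ⟨z, hz⟩ := hB.1
  have hzG : z ∈ cube n d \ S.G j := ⟨(hB.2.1 hz).1, fun h => (hB.2.1 hz).2 (S.nested j i hij hj h)⟩
  obtain ⟨B', hB', hzB'⟩ := (S.isGrid j hj).exists_isBlock_mem hk
    (hkw.trans (le_div_two_pow_sysR_sub (by omega) hwn j)) hzG
  exact ⟨B', hB', hB.subset_of_inter_nonempty hB' (S.nested j i hij hj) ⟨z, hz, hzB'⟩⟩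

theorem subset_of_inter_kbox (hk : 2 ≤ k) (hkw : k ≤ w) (hwn : w ≤ n) {i j : ℕ}
    (hij : i ≤ j) (hj : j ≤ sysR n w) {B B' : Set (Fin d → ℕ)} {a : Fin d → ℕ}
    (hB : IsBlock n d (S.G i) B) (hB' : IsBlock n d (S.G j) B')
    (h : (B ∩ kbox d k a).Nonempty) (h' : (B' ∩ kbox d k a).Nonempty) : B ⊆ B' := by
  obtain ⟨D, hD, hBD⟩ := S.exists_isBlock_superset hk hkw hwn hij hj hB
  have hDB' : D = B' := (S.isGrid j hj).eq_of_inter_kbox hk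
    (hkw.trans (le_div_two_pow_sysR_sub (by omega) hwn j)) hD hB'
    (h.mono (Set.inter_subset_inter_left _ hBD)) h'
  exact hDB' ▸ hBD

theorem subset_total_of_inter_kbox (hk : 2 ≤ k) (hkw : k ≤ w) (hwn : w ≤ n)
    {C C' : Set (Fin d → ℕ)} {a : Fin d → ℕ} (hC : S.IsBlockOrCube C)
    (hC' : S.IsBlockOrCube C') (h : (C ∩ kbox d k a).Nonempty)
    (h' : (C' ∩ kbox d k a).Nonempty) : C ⊆ C' ∨ C' ⊆ C := by
  rcases hC with rfl | ⟨j, hj, hC⟩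
  · rcases hC' with rfl | ⟨j', -, hC'⟩
    exacts [.inl le_rfl, .inr hC'.subset_cube]
  rcases hC' with rfl | ⟨j', hj', hC'⟩
  · exact .inl hC.subset_cube
  rcases le_total j j' with hjj | hjj
  exacts [.inl (S.subset_of_inter_kbox hk hkw hwn hjj hj' hC hC' h h'),
    .inr (S.subset_of_inter_kbox hk hkw hwn hjj hj hC' hC h' h)]

theorem isBlock_parentSet (hk : 2 ≤ k) (hkw : k ≤ w) (hwn : w ≤ n) {i : ℕ}
    (hi : i < sysR n w) {B : Set (Fin d → ℕ)} (hB : IsBlock n d (S.G i) B) :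
    IsBlock n d (S.G (i + 1)) (parentSet n d k w S i B) := by
  obtain ⟨D, hD, hBD⟩ := S.exists_isBlock_superset hk hkw hwn (Nat.le_succ i) hi hB
  have hparents : {B' | IsBlock n d (S.G (i + 1)) B' ∧ B ⊆ B'} = {D} := by
    ext B'
    refine ⟨fun ⟨hB', hBB'⟩ => ?_, fun h => h ▸ ⟨hD, hBD⟩⟩
    obtain ⟨z, hz⟩ := hB.1
    exact hB'.eq_of_inter_nonempty hD ⟨z, hBB' hz, hBD hz⟩
  rwa [parentSet, if_neg hi.ne, hparents, Set.sUnion_singleton]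

theorem subset_parentSet (hk : 2 ≤ k) (hkw : k ≤ w) (hwn : w ≤ n) {i : ℕ}
    (hi : i ≤ sysR n w) {B : Set (Fin d → ℕ)} (hB : IsBlock n d (S.G i) B) :
    B ⊆ parentSet n d k w S i B := by
  unfold parentSet
  split_ifs with hir
  · exact hB.subset_cube
  obtain ⟨D, hD, hBD⟩ :=
    S.exists_isBlock_superset hk hkw hwn (Nat.le_succ i) (by omega) hB
  exact hBD.trans (Set.subset_sUnion_of_mem ⟨hD, hBD⟩)

theorem isBlockOrCube_parentSet (hk : 2 ≤ k) (hkw : k ≤ w) (hwn : w ≤ n) {i : ℕ}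
    (hi : i ≤ sysR n w) {B : Set (Fin d → ℕ)} (hB : IsBlock n d (S.G i) B) :
    S.IsBlockOrCube (parentSet n d k w S i B) := by
  rcases hi.eq_or_lt with rfl | hi
  · exact .inl (if_pos rfl)
  · exact .inr ⟨i + 1, hi, S.isBlock_parentSet hk hkw hwn hi hB⟩

/-- Widths at most double from one level to the next, and `2k ≤ w` makes up for the `k - 1`
entries trimmed from each interval. -/
theorem ncard_parentSet_le (hk : 2 ≤ k) (hkw : 2 * k ≤ w) (hwn : w ≤ n) {i : ℕ}
    (hi : i ≤ sysR n w) {B : Set (Fin d → ℕ)} (hB : IsBlock n d (S.G i) B) :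
    (parentSet n d k w S i B).ncard ≤ 3 ^ d * B.ncard := by
  have hwi := le_div_two_pow_sysR_sub (by omega) hwn i
  have hB_ge := ((S.isGrid i hi).ncard_isBlock_bounds hk (by omega) hB).1
  suffices ∃ m, (parentSet n d k w S i B).ncard ≤ m ^ d ∧
      m ≤ 3 * (n / 2 ^ (sysR n w - i) + 1 - k) by
    obtain ⟨m, hm, hm3⟩ := this
    calc _ ≤ m ^ d := hm
      _ ≤ (3 * (n / 2 ^ (sysR n w - i) + 1 - k)) ^ d := Nat.pow_le_pow_left hm3 d
      _ ≤ 3 ^ d * B.ncard := by rw [mul_pow]; exact Nat.mul_le_mul_left _ hB_ge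
  rcases hi.eq_or_lt with rfl | hi
  · refine ⟨n, by rw [parentSet, if_pos rfl, ncard_cube], ?_⟩
    rw [Nat.sub_self, pow_zero, Nat.div_one] at hwi ⊢
    omega
  · have hwi' := le_div_two_pow_sysR_sub (by omega) hwn (i + 1)
    refine ⟨_, ((S.isGrid (i + 1) hi).ncard_isBlock_bounds hk (by omega)
      (S.isBlock_parentSet hk (by omega) hwn hi hB)).2, ?_⟩
    have := div_two_pow_le n (sysR n w - (i + 1))
    rw [show sysR n w - (i + 1) + 1 = sysR n w - i by omega] at this
    omega

end GridSystem

open Classical in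
noncomputable def patch {α β : Type*} (T : Set (Set α)) (A : α → β) (Z : Set α → α → β) :
    α → β :=
  fun x => if h : ∃ C, Maximal (· ∈ T) C ∧ x ∈ C then Z h.choose x else A x

section Patch

variable {α β : Type*} {T : Set (Set α)} {A : α → β} {Z : Set α → α → β} {x : α}

theorem patch_eq_of_notMem_sUnion (hx : x ∉ ⋃₀ T) : patch T A Z x = A x := by
  unfold patch
  exact dif_neg fun ⟨C, hC, hxC⟩ => hx ⟨C, hC.1, hxC⟩

theorem patch_eq_of_forall_subset {C : Set α} (hC : Maximal (· ∈ T) C)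
    (hZC : ∀ y ∉ C, Z C y = A y) (hx : ∀ C' ∈ T, x ∈ C' → C' ⊆ C) : patch T A Z x = Z C x := by
  unfold patch
  split_ifs with h
  · obtain ⟨hmax, hxC'⟩ := h.choose_spec
    rw [(hx _ hmax.1 hxC').antisymm (hmax.2 hC.1 (hx _ hmax.1 hxC'))]
  · exact (hZC x fun hxC => h ⟨C, hC, hxC⟩).symm

end Patch

section Witnesses

variable {n d k w : ℕ} (S : GridSystem n d k w) {σ : Type*} {F : Set ((Fin d → ℕ) → σ)}
  {A : (Fin d → ℕ) → σ}

theorem exists_repair {C : Set (Fin d → ℕ)} (h : ¬ Unrepairable n d k F A C) :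
    ∃ Z : (Fin d → ℕ) → σ, (∀ x ∉ C, Z x = A x) ∧
      ¬ HasCopyIn n d k F Z (blockClosure n d k C) := by
  classical
  simp only [Unrepairable, not_forall] at h
  obtain ⟨A₁, hA₁, hno⟩ := h
  refine ⟨C.piecewise A₁ A, fun x hx => C.piecewise_eq_of_notMem _ _ hx,
    fun hZ => hno (hZ.congr fun x hx => ?_)⟩
  by_cases hxC : x ∈ C
  · exact C.piecewise_eq_of_mem _ _ hxC
  · rw [C.piecewise_eq_of_notMem _ _ hxC, hA₁ x ⟨hx, hxC⟩]

namespace GridSystem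

theorem exists_isMaximalWitness_superset {i : ℕ} {B : Set (Fin d → ℕ)}
    (hB : IsWitness n d k w S F A i B) :
    ∃ i' B', IsMaximalWitness n d k w S F A i' B' ∧ B ⊆ B' := by
  induction hm : sysR n w - i using Nat.strong_induction_on generalizing i B with
  | _ m ih =>
    by_cases hmax : IsMaximalWitness n d k w S F A i B
    · exact ⟨i, B, hmax, le_rfl⟩
    simp only [IsMaximalWitness, hB, true_and, not_forall, not_not] at hmax
    obtain ⟨j, hij, hj, B', hB', hBB', hunrep⟩ := hmax
    obtain ⟨i', B'', hmax, hB'B''⟩ :=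
      ih _ (by omega) (i := j) ⟨hj, hB', .inr ⟨by omega, hunrep⟩⟩ rfl
    exact ⟨i', B'', hmax, hBB'.trans hB'B''⟩

theorem exists_isMaximalWitness_inter_kbox (hk : 2 ≤ k) (hkw : k ≤ w) (hwn : w ≤ n)
    {a : Fin d → ℕ} (ha : ValidLoc n d k a) (hA : HasCopyAt d k F A a) :
    ∃ i B, IsMaximalWitness n d k w S F A i B ∧ (B ∩ kbox d k a).Nonempty := by
  obtain ⟨B₀, hB₀, hB₀a⟩ := (S.isGrid 0 (Nat.zero_le _)).exists_isBlock_inter_kbox hk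
    (hkw.trans (le_div_two_pow_sysR_sub (by omega) hwn 0)) (hkw.trans hwn) ha
  obtain ⟨i, B, hB, hB₀B⟩ := S.exists_isMaximalWitness_superset
    ⟨Nat.zero_le _, hB₀, .inl ⟨rfl, a, ha, hA, kbox_subset_blockClosure (hkw.trans hwn) ha hB₀a⟩⟩
  exact ⟨i, B, hB, hB₀a.mono (Set.inter_subset_inter_left _ hB₀B)⟩

theorem not_unrepairable_parentSet (hk : 2 ≤ k) (hkw : k ≤ w) (hwn : w ≤ n)
    (hP : ∃ A₀, SatisfiesP n d k F A₀) {i : ℕ} {B : Set (Fin d → ℕ)}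
    (hB : IsMaximalWitness n d k w S F A i B) :
    ¬ Unrepairable n d k F A (parentSet n d k w S i B) := by
  by_cases hi : i = sysR n w
  · rw [parentSet, if_pos hi]
    intro hunrep
    obtain ⟨A₀, hA₀⟩ := hP
    obtain ⟨a, ha, hcopy, -⟩ := hunrep A₀ fun x hx => absurd hx.1.1 hx.2
    exact hA₀ ⟨a, ha, hcopy⟩
  have hi' := lt_of_le_of_ne hB.1.1 hi
  exact hB.2 (i + 1) i.lt_succ_self hi' _ (S.isBlock_parentSet hk hkw hwn hi' hB.1.2.1)
    (S.subset_parentSet hk hkw hwn hB.1.1 hB.1.2.1)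

/-- Repair independently the maximal members of `T`; two members meeting a common box are
nested, so every box sees at most one repaired member. -/
theorem exists_satisfiesP_of_cover (hk : 2 ≤ k) (hkw : k ≤ w) (hwn : w ≤ n)
    {T : Set (Set (Fin d → ℕ))} (hT : T.Finite) (hTS : ∀ C ∈ T, S.IsBlockOrCube C)
    (hrep : ∀ C ∈ T, ¬ Unrepairable n d k F A C)
    (hcover : ∀ a, ValidLoc n d k a → HasCopyAt d k F A a →
      ∃ C ∈ T, (C ∩ kbox d k a).Nonempty) :
    ∃ A', SatisfiesP n d k F A' ∧ ∀ x, A x ≠ A' x → x ∈ ⋃₀ T := by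
  have : Nonempty ((Fin d → ℕ) → σ) := ⟨A⟩
  choose! Z hZA hZ using fun C hC => exists_repair (hrep C hC)
  refine ⟨patch T A Z, ?_, fun x hx => by_contra fun hxT => hx (patch_eq_of_notMem_sUnion hxT).symm⟩
  rintro ⟨a, ha, hcopy⟩
  by_cases hmeet : ∃ C ∈ T, (C ∩ kbox d k a).Nonempty
  · obtain ⟨C₀, hC₀, hC₀a⟩ := hmeet
    obtain ⟨C, hC₀C, hC⟩ := hT.exists_le_maximal hC₀
    have hCa := hC₀a.mono (Set.inter_subset_inter_left _ hC₀C)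
    have hsub : ∀ x ∈ kbox d k a, ∀ C' ∈ T, x ∈ C' → C' ⊆ C := fun x hx C' hC' hxC' =>
      (S.subset_total_of_inter_kbox hk hkw hwn (hTS C' hC') (hTS C hC.1) ⟨x, hxC', hx⟩
        hCa).elim id (hC.2 hC')
    exact hZ C hC.1 ⟨a, ha, hcopy.congr fun x hx =>
      patch_eq_of_forall_subset hC (hZA C hC.1) (hsub x hx),
      kbox_subset_blockClosure (hkw.trans hwn) ha hCa⟩
  · refine hmeet (hcover a ha (hcopy.congr fun x hx => ?_))
    exact patch_eq_of_notMem_sUnion fun ⟨C, hC, hxC⟩ => hmeet ⟨C, hC, x, hxC, hx⟩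

theorem maxWitnessFamily_finite : (MaxWitnessFamily n d k w S F A).Finite :=
  (cube_finite n d).finite_subsets.subset fun _ ⟨_, hB⟩ => hB.1.2.1.subset_cube

theorem exists_parent_map (hk : 2 ≤ k) (hkw : 2 * k ≤ w) (hwn : w ≤ n)
    (hP : ∃ A₀, SatisfiesP n d k F A₀) :
    ∃ par : Set (Fin d → ℕ) → Set (Fin d → ℕ), ∀ B ∈ MaxWitnessFamily n d k w S F A,
      S.IsBlockOrCube (par B) ∧ B ⊆ par B ∧ (par B).ncard ≤ 3 ^ d * B.ncard ∧
        ¬ Unrepairable n d k F A (par B) := by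
  choose! lvl hlvl using fun B (hB : B ∈ MaxWitnessFamily n d k w S F A) => hB
  refine ⟨fun B => parentSet n d k w S (lvl B) B, fun B hB => ?_⟩
  obtain ⟨⟨hi, hB', -⟩, -⟩ := hlvl B hB
  exact ⟨S.isBlockOrCube_parentSet hk (by omega) hwn hi hB',
    S.subset_parentSet hk (by omega) hwn hi hB', S.ncard_parentSet_le hk hkw hwn hi hB',
    S.not_unrepairable_parentSet hk (by omega) hwn hP (hlvl B hB)⟩

end GridSystem

end Witnesses

theorem maximal_witnesses_total_size_general (n d k : ℕ) (hk : 2 ≤ k)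
    (hn : 2 * k ≤ n) {σ : Type*} (F : Set ((Fin d → ℕ) → σ))
    (hP : ∃ A₀ : (Fin d → ℕ) → σ, SatisfiesP n d k F A₀)
    (S : GridSystem n d k (2 * k)) (ε : ℝ)
    (A : (Fin d → ℕ) → σ) (hA : FarFrom n d k F ε A) :
    ε * ((n : ℝ) / 3) ^ d ≤
      ∑ᶠ B ∈ MaxWitnessFamily n d k (2 * k) S F A, (B.ncard : ℝ) := by
  set W := MaxWitnessFamily n d k (2 * k) S F A
  have hW : W.Finite := S.maxWitnessFamily_finite
  obtain ⟨par, hpar⟩ := S.exists_parent_map hk le_rfl hn hP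
  have hcover (a : Fin d → ℕ) (ha : ValidLoc n d k a) (hcopy : HasCopyAt d k F A a) :
      ∃ C ∈ par '' W, (C ∩ kbox d k a).Nonempty := by
    obtain ⟨i, B, hB, hBa⟩ := S.exists_isMaximalWitness_inter_kbox hk (by omega) hn ha hcopy
    exact ⟨par B, ⟨B, ⟨i, hB⟩, rfl⟩, hBa.mono (Set.inter_subset_inter_left _ (hpar B ⟨i, hB⟩).2.1)⟩
  obtain ⟨A', hA', hdiff⟩ := S.exists_satisfiesP_of_cover hk (by omega) hn (hW.image par)
    (by simpa using fun B hB => (hpar B hB).1) (by simpa using fun B hB => (hpar B hB).2.2.2)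
    hcover
  have hfin : (⋃₀ (par '' W)).Finite := (cube_finite n d).subset <|
    Set.sUnion_subset (by simpa using fun B hB => (hpar B hB).1.subset_cube)
  have hcount := (Set.ncard_le_ncard (s := {x | x ∈ cube n d ∧ A x ≠ A' x})
    (fun x hx => hdiff x hx.2) hfin).trans
    (ncard_sUnion_image_le hW fun B hB => (hpar B hB).2.2.1)
  rw [← Nat.cast_le (α := ℝ)] at hcount
  push_cast [Nat.cast_finsum_mem hW] at hcount
  rw [div_pow, ← mul_div_assoc, div_le_iff₀ (by positivity)]
  linarith [hA A' hA']

/-- If the `k`-local property `P(F)` is nonempty and `A` is `ε`-far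
from it, then for an `(n,d,k,2k)`-system of grids, the total number of entries in the
maximal `(P,A)`-witness blocks is at least `ε·(n/3)^d`. -/
theorem maximal_witnesses_total_size (n d k : ℕ) (hd : 1 ≤ d) (hk : 2 ≤ k)
    (hn : 2 * k ≤ n) {σ : Type*} (F : Set ((Fin d → ℕ) → σ))
    (hP : ∃ A₀ : (Fin d → ℕ) → σ, SatisfiesP n d k F A₀)
    (S : GridSystem n d k (2 * k)) (ε : ℝ) (hε : 0 < ε)
    (A : (Fin d → ℕ) → σ) (hA : FarFrom n d k F ε A) :
    ε * ((n : ℝ) / 3) ^ d ≤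
      ∑ᶠ B ∈ MaxWitnessFamily n d k (2 * k) S F A, (B.ncard : ℝ) :=
  maximal_witnesses_total_size_general n d k hk hn F hP S ε A hA
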